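/- With β = 2^{-1/3} and the coefficients α_{k,i} as defined, for all k ≥ 2 and 0 < i < k one has α_{k,i} > 1; more precisely 0 < β⁷ - β⁸ ≤ β^{-2k}(α_{k,i} - 1) ≤ β⁷. -/
import Mathlib
set_option maxHeartbeats 1000000

noncomputable def β : ℝ := (2 : ℝ) ^ (-(1:ℝ)/3)

/-- The coefficients `α_{k,i}` from the paper. -/
noncomputable def alph (k i : ℕ) : ℝ :=
  if k = 0 then (1 + β ^ 4 - β⁻¹) / (1 - β ^ 7 - β ^ 11)
  else if i = 0 ∨ i = k then
    (1 - β ^ (2 * k + 2)) * (1 + β ^ (2 * k + 7))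
      / (1 - β ^ (2 * k + 7) - β ^ (4 * k + 11))
  else
    (1 - β ^ (3 * k + 6) * Real.cosh (((k : ℝ) - 2 * i) * Real.log β))
      / (1 - β ^ (2 * k + 7) - β ^ (4 * k + 11))

lemma beta_pos : 0 < β := Real.rpow_pos_of_pos two_pos _

lemma beta_lt_one : β < 1 :=
  Real.rpow_lt_one_of_one_lt_of_neg one_lt_two (by norm_num)

lemma beta_cube : β ^ 3 = 1/2 := by
  rw [β, ← Real.rpow_natCast ((2:ℝ) ^ (-(1:ℝ)/3)) 3, ← Real.rpow_mul (by norm_num)]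
  norm_num

lemma cosh_le_exp_abs (x : ℝ) : Real.cosh x ≤ Real.exp |x| := by
  rw [Real.cosh_eq]
  have h1 : Real.exp x ≤ Real.exp |x| := Real.exp_le_exp.2 (le_abs_self x)
  have h2 : Real.exp (-x) ≤ Real.exp |x| := Real.exp_le_exp.2 (neg_le_abs x)
  linarith

/-- For `k ≥ 2` and `0 < i < k`: `α_{k,i} > 1`, with
`0 < β⁷ - β⁸ ≤ β^{-2k}(α_{k,i} - 1) ≤ β⁷`. -/
theorem alph_interior_estimate (k i : ℕ) (hk : 2 ≤ k) (hi0 : 0 < i) (hik : i < k) :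
    1 < alph k i
    ∧ 0 < β ^ 7 - β ^ 8
    ∧ β ^ 7 - β ^ 8 ≤ (alph k i - 1) / β ^ (2 * k)
    ∧ (alph k i - 1) / β ^ (2 * k) ≤ β ^ 7 := by
  have hb0 := beta_pos
  have hb1 := beta_lt_one
  have hb3 := beta_cube
  have hb1' : β ≤ 1 := hb1.le
  have h7 : β ^ 7 = β / 4 := by
    rw [show (7:ℕ) = 1 + 3*2 from rfl, pow_add, pow_mul, beta_cube]; ring
  have h8 : β ^ 8 = β ^ 2 / 4 := by
    rw [show (8:ℕ) = 2 + 3*2 from rfl, pow_add, pow_mul, beta_cube]; ring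
  have h10 : β ^ 10 = β / 8 := by
    rw [show (10:ℕ) = 1 + 3*3 from rfl, pow_add, pow_mul, beta_cube]; ring
  have h18 : β ^ 18 = 1 / 64 := by
    rw [show (18:ℕ) = 3*6 from rfl, pow_mul, beta_cube]; norm_num
  have h78 : 0 < β ^ 7 - β ^ 8 := by
    rw [h7, h8]; nlinarith
  -- unfold alph
  set C := Real.cosh (((k : ℝ) - 2 * i) * Real.log β) with hC
  have hk0 : k ≠ 0 := by omega
  have hii : ¬ (i = 0 ∨ i = k) := by omega
  have halph : alph k i =
      (1 - β ^ (3 * k + 6) * C) / (1 - β ^ (2 * k + 7) - β ^ (4 * k + 11)) := by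
    rw [alph, if_neg hk0, if_neg hii]
  set D := 1 - β ^ (2 * k + 7) - β ^ (4 * k + 11) with hD
  -- D bounds
  have hpowle : ∀ m n : ℕ, m ≤ n → β ^ n ≤ β ^ m := fun m n h =>
    pow_le_pow_of_le_one hb0.le hb1' h
  have hpow1 : ∀ n : ℕ, β ^ n ≤ 1 := fun n => pow_le_one₀ hb0.le hb1'
  have hpow0 : ∀ n : ℕ, 0 < β ^ n := fun n => pow_pos hb0 n
  have h11 : β ^ 11 = β ^ 2 / 8 := by
    rw [show (11:ℕ) = 2 + 3*3 from rfl, pow_add, pow_mul, beta_cube]; ring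
  have h19 : β ^ 19 = β / 64 := by
    rw [show (19:ℕ) = 1 + 3*6 from rfl, pow_add, pow_mul, beta_cube]; ring
  have hD0 : 0 < D := by
    have l1 : β ^ (2*k+7) ≤ β ^ 11 := hpowle 11 _ (by omega)
    have l2 : β ^ (4*k+11) ≤ β ^ 19 := hpowle 19 _ (by omega)
    rw [hD]; rw [h11] at l1; rw [h19] at l2; nlinarith
  have hD1 : D ≤ 1 := by
    have := hpow0 (2*k+7); have := hpow0 (4*k+11); rw [hD]; linarith
  -- cosh bounds
  have hC1 : 1 ≤ C := Real.one_le_cosh _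
  have hlog : Real.log β < 0 := Real.log_neg hb0 hb1
  have habs : |((k : ℝ) - 2 * i) * Real.log β| ≤ ((k:ℝ) - 2) * (-Real.log β) := by
    rw [abs_mul, abs_of_neg hlog]
    have h1 : |(k : ℝ) - 2 * i| ≤ (k:ℝ) - 2 := by
      rw [abs_le]
      have hi1 : (1:ℝ) ≤ (i:ℝ) := by exact_mod_cast hi0
      have hi2 : (i:ℝ) ≤ (k:ℝ) - 1 := by
        have : (i:ℝ) + 1 ≤ (k:ℝ) := by exact_mod_cast hik
        linarith
      constructor <;> linarith
    have : (0:ℝ) ≤ -Real.log β := by linarith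
    exact mul_le_mul_of_nonneg_right h1 this
  have hCexp : C ≤ (β⁻¹) ^ (k - 2) := by
    have e1 : C ≤ Real.exp (((k:ℝ) - 2) * (-Real.log β)) :=
      (cosh_le_exp_abs _).trans (Real.exp_le_exp.2 habs)
    have e2 : ((k:ℝ) - 2) = ((k - 2 : ℕ) : ℝ) := by
      have : (2:ℝ) ≤ (k:ℝ) := by exact_mod_cast hk
      push_cast [Nat.cast_sub hk]; ring
    rw [e2, Real.exp_nat_mul] at e1
    have e3 : Real.exp (-Real.log β) = β⁻¹ := by rw [Real.exp_neg, Real.exp_log hb0]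
    rwa [e3] at e1
  have hX8 : β ^ (k + 6) * C ≤ β ^ 8 := by
    have hs : β ^ (k + 6) = β ^ (k - 2) * β ^ 8 := by
      rw [← pow_add, show k - 2 + 8 = k + 6 from by omega]
    have hle : β ^ (k-2) * C ≤ β ^ (k-2) * (β⁻¹) ^ (k-2) :=
      mul_le_mul_of_nonneg_left hCexp (hpow0 _).le
    rw [← mul_pow, mul_inv_cancel₀ hb0.ne', one_pow] at hle
    calc β ^ (k+6) * C = (β ^ (k-2) * C) * β ^ 8 := by rw [hs]; ring
      _ ≤ 1 * β ^ 8 := mul_le_mul_of_nonneg_right hle (hpow0 8).le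
      _ = β ^ 8 := one_mul _
  have hXlow : β ^ (k + 6) ≤ β ^ (k + 6) * C := le_mul_of_one_le_right (hpow0 _).le hC1
  -- split powers
  set e := β ^ (2 * k) with he
  have he0 : 0 < e := hpow0 _
  have s1 : β ^ (3*k+6) = e * β ^ (k+6) := by
    rw [show 3*k+6 = 2*k+(k+6) from by omega, pow_add]
  have s2 : β ^ (2*k+7) = e * β ^ 7 := by
    rw [show 2*k+7 = 2*k+7 from rfl, pow_add]
  have s3 : β ^ (4*k+11) = e * β ^ (2*k+11) := by
    rw [show 4*k+11 = 2*k+(2*k+11) from by omega, pow_add]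
  have halph1 : alph k i - 1 = (e * β ^ 7 + e * β ^ (2*k+11) - e * (β ^ (k+6) * C)) / D := by
    rw [halph, div_sub_one hD0.ne']
    congr 1
    rw [hD, s1, s2, s3]; ring
  -- key numerator inequality for upper bound
  have hkey : β ^ (2*k+11) + β ^ 14 * e + β ^ 7 * β ^ (2*k+11) * e ≤ β ^ (k+6) := by
    have t1 : β ^ (2*k+11) ≤ β ^ (k+6) * β ^ 7 := by
      rw [← pow_add]; exact hpowle _ _ (by omega)
    have t2 : β ^ 14 * e ≤ β ^ (k+6) * β ^ 10 := by
      rw [he, ← pow_add, ← pow_add]; exact hpowle _ _ (by omega)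
    have t3 : β ^ 7 * β ^ (2*k+11) * e ≤ β ^ (k+6) * β ^ 18 := by
      rw [he, ← pow_add, ← pow_add, ← pow_add]; exact hpowle _ _ (by omega)
    have tsum : β ^ 7 + β ^ 10 + β ^ 18 ≤ 1 := by rw [h7, h10, h18]; nlinarith
    have t4 : β ^ (k+6) * (β ^ 7 + β ^ 10 + β ^ 18) ≤ β ^ (k+6) * 1 :=
      mul_le_mul_of_nonneg_left tsum (hpow0 _).le
    linarith
  have hlow : β ^ 7 - β ^ 8 ≤ (alph k i - 1) / e := by
    rw [halph1, div_div, le_div_iff₀ (by positivity)]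
    have r1 : e * (β ^ (k+6) * C) ≤ e * β ^ 8 :=
      mul_le_mul_of_nonneg_left hX8 he0.le
    have rDe : D * e ≤ e := mul_le_of_le_one_left he0.le hD1
    have r2 : (β ^ 7 - β ^ 8) * (D * e) ≤ (β ^ 7 - β ^ 8) * e :=
      mul_le_mul_of_nonneg_left rDe h78.le
    have r3 : 0 ≤ e * β ^ (2*k+11) := by positivity
    linarith
  have hhigh : (alph k i - 1) / e ≤ β ^ 7 := by
    rw [halph1, div_div, div_le_iff₀ (by positivity), hD, s2, s3]
    have r1 : e * (β ^ (2*k+11) + β ^ 14 * e + β ^ 7 * β ^ (2*k+11) * e)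
        ≤ e * (β ^ (k+6) * C) :=
      mul_le_mul_of_nonneg_left (hkey.trans (hXlow.trans (le_refl _))) he0.le
    linarith
  have hgt : 1 < alph k i := by
    have h1 : (β ^ 7 - β ^ 8) * e ≤ alph k i - 1 := by
      have := (le_div_iff₀ he0).1 hlow; linarith
    nlinarith
  exact ⟨hgt, h78, hlow, hhigh⟩
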